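/- Suppose 0 < α ≤ 1/2 and Y_T(s) ≥ y_α(s) for all s ≥ 0. Then for any 0 ≤ t ≤ α^{−3/2} and any γ ≥ 1, on the event R(T, t, αγ) one has Y_{T+t}(s) ≥ y_α(s) for all s ≥ 0. -/

import Mathlib

open MeasureTheory ProbabilityTheory Filter Set

noncomputable section

/-- A continuous-time simple random walk on `ℤ` with jump rate `1`, started at `0`:
at rate `1` it jumps to `±1` with probability `1/2` each.  The law is axiomatized via
right-continuous step paths with jumps of size `1`, stationary independent increments,
and the explicit one-dimensional marginal distribution (the difference of two independent
`Poisson (t/2)` variables). -/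
structure SRW (Ω : Type) [MeasurableSpace Ω] where
  μ : Measure Ω
  prob : IsProbabilityMeasure μ
  W : ℝ → Ω → ℤ
  meas : ∀ t : ℝ, Measurable (W t)
  start : ∀ t : ℝ, t ≤ 0 → ∀ ω, W t ω = 0
  right_const : ∀ ω, ∀ t : ℝ, ∃ ε > 0, ∀ s ∈ Set.Ico t (t + ε), W s ω = W t ω
  unit_jumps : ∀ ω, ∀ t : ℝ, ∃ ε > 0, ∀ s ∈ Set.Ioo (t - ε) t, (W t ω - W s ω).natAbs ≤ 1
  marginal : ∀ t : ℝ, 0 ≤ t → ∀ k : ℤ,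
    μ {ω | W t ω = k} = ENNReal.ofReal
      (Real.exp (-t) * ∑' n : ℕ, (t / 2) ^ (2 * n + k.natAbs) /
        (n.factorial * (n + k.natAbs).factorial))
  stationary : ∀ s t : ℝ, 0 ≤ s → s ≤ t →
    μ.map (fun ω => W t ω - W s ω) = μ.map (W (t - s))
  indep_incr : ∀ n : ℕ, ∀ t : Fin (n + 1) → ℝ, Monotone t → 0 ≤ t 0 →
    iIndepFun
      (fun i : Fin n => fun ω => W (t i.succ) ω - W (t i.castSucc) ω) μ

/-- One-dimensional multi-particle diffusion limited aggregation with particle density `K`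
(restricted to the right half-line; `X t` is the rightmost site of the aggregate at time `t`).

Initially each site of `ℤ` receives an independent `Poisson K` number of particles (`η`),
particles move as independent rate-1 continuous-time simple random walks until frozen
(`pos`), and a particle freezes (its site being added to the aggregate) when it attempts
to jump onto the aggregate.  The law of the rightmost-site process `X` is axiomatized
through its conditional jump intensity
`S(t) = (K/2)·P[ ∀ s ≤ t, W s ≤ X t - X (t-s) ]` (`W` an independent rate-1 walk):
the compensated process `X t - ∫_0^t S(u) du` is a martingale (`intensity`). -/
structure MDLA1D (K : ℝ) (Ω Ω' : Type) [MeasurableSpace Ω] [MeasurableSpace Ω'] where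
  μ : Measure Ω
  prob : IsProbabilityMeasure μ
  /-- the underlying filtration of the process -/
  F : MeasureTheory.Filtration ℝ (inferInstance : MeasurableSpace Ω)
  /-- the rightmost site of the aggregate at time `t` (`= 0` for `t ≤ 0`) -/
  X : ℝ → Ω → ℤ
  X_neg : ∀ t : ℝ, t ≤ 0 → ∀ ω, X t ω = 0
  X_mono : ∀ ω, Monotone fun t => X t ω
  X_adapted : ∀ t : ℝ, Measurable[F t] (X t)
  X_right_const : ∀ ω, ∀ t : ℝ, ∃ ε > 0, ∀ s ∈ Set.Ico t (t + ε), X s ω = X t ω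
  X_unit_jumps : ∀ ω, ∀ t : ℝ, ∃ ε > 0, ∀ s ∈ Set.Ioo (t - ε) t, X t ω - X s ω ≤ 1
  /-- an auxiliary independent rate-1 walk, used to express the jump intensity -/
  walk : SRW Ω'
  /-- initial number of particles at each site: i.i.d. `Poisson K` -/
  η : ℤ → Ω → ℕ
  η_meas : ∀ z : ℤ, Measurable (η z)
  η_law : ∀ z : ℤ, ∀ n : ℕ, μ {ω | η z ω = n} =
    ENNReal.ofReal (Real.exp (-K) * K ^ n / n.factorial)
  η_indep : iIndepFun η μ
  /-- position at time `t` of the `n`-th particle started at site `z` (frozen particles stop) -/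
  pos : ℤ × ℕ → ℝ → Ω → ℤ
  pos_init : ∀ j : ℤ × ℕ, ∀ t : ℝ, t ≤ 0 → ∀ ω, pos j t ω = j.1
  /-- once a particle's site is absorbed into the aggregate it is frozen forever -/
  pos_freeze : ∀ j : ℤ × ℕ, ∀ ω, ∀ t : ℝ, pos j t ω ≤ X t ω →
    ∀ u : ℝ, t ≤ u → pos j u ω = pos j t ω
  /-- the compensated counting process is a martingale: `X` jumps at conditional rate
  `S(t) = (K/2)·P[ ∀ s ∈ [0,t], W s ≤ X t - X (t-s) ]`. -/
  intensity : Martingale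
    (fun t ω => (X t ω : ℝ) - ∫ u in Set.Ioc (0:ℝ) t,
      K / 2 * (walk.μ {w | ∀ s ∈ Set.Icc (0:ℝ) u,
        (walk.W s w : ℝ) ≤ ((X u ω - X (u - s) ω : ℤ) : ℝ)}).toReal) F μ

namespace MDLA1D

variable {K : ℝ} {Ω Ω' : Type} [MeasurableSpace Ω] [MeasurableSpace Ω']

/-- `Y t s = X t - X (t-s)` for `0 ≤ s ≤ t` and `Y t s = ∞` for `s > t`. -/
def Y (M : MDLA1D K Ω Ω') (t s : ℝ) (ω : Ω) : EReal :=
  if s ≤ t then (((M.X t ω - M.X (t - s) ω : ℤ) : ℝ) : EReal) else ⊤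

/-- The conditional rate `S(t) = (K/2)·P[ ∀ s ∈ [0,t], W s ≤ Y t s | Y t ]` at which `X`
increases; since the auxiliary walk `W` is independent of the process, the conditional
probability given `Y t` is obtained by plugging the realized function `Y t · ω` into the
law of `W`. -/
def S (M : MDLA1D K Ω Ω') (t : ℝ) (ω : Ω) : ℝ :=
  K / 2 * (M.walk.μ {w | ∀ s ∈ Set.Icc (0:ℝ) t,
    ((M.walk.W s w : ℝ) : EReal) ≤ M.Y t s ω}).toReal

/-- The σ-algebra generated by the random function `Y t`. -/
def sigmaY (M : MDLA1D K Ω Ω') (t : ℝ) : MeasurableSpace Ω :=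
  MeasurableSpace.comap (fun ω s => M.Y t s ω) inferInstance

/-- The event `R(t,s,γ) = {X_(t+s) - X_t ≥ γ s}`. -/
def R (M : MDLA1D K Ω Ω') (t s γ : ℝ) : Set Ω :=
  {ω | γ * s ≤ ((M.X (t + s) ω - M.X t ω : ℤ) : ℝ)}

/-- `Y t` is permissive at scale `i` if `Y t (2^i) ≥ 10·i·2^(i/2)`. -/
def permissive (M : MDLA1D K Ω Ω') (t : ℝ) (i : ℕ) (ω : Ω) : Prop :=
  ((10 * i * (2:ℝ) ^ ((i:ℝ)/2) : ℝ) : EReal) ≤ M.Y t ((2:ℝ) ^ (i:ℕ)) ω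

end MDLA1D

/-- The conditional probability of an event `E` given a sub-σ-algebra `m'`,
as a conditional expectation of the indicator of `E`. -/
def condP {Ω : Type} [MeasurableSpace Ω] (μ : MeasureTheory.Measure Ω)
    (m' : MeasurableSpace Ω) (E : Set Ω) : Ω → ℝ :=
  MeasureTheory.condExp (m := m') (μ := μ) (f := E.indicator (fun _ => (1 : ℝ)))

/-- The barrier function `y_α`: `y_α s = 0` for `s ≤ α^(-3/2)` and
`y_α s = min (α (s - α^(-3/2))) (√s · log₂ s)` for `s ≥ α^(-3/2)`. -/
def yFun (α s : ℝ) : ℝ :=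
  if s ≤ α ^ (-(3:ℝ)/2) then 0
  else min (α * (s - α ^ (-(3:ℝ)/2))) (Real.sqrt s * Real.logb 2 s)

/-!
Since `Y_{T+t}(s) = (X_{T+t} - X_T) + Y_T(s - t)` and on `R(T, t, αγ)` the increment
`X_{T+t} - X_T` is at least `α t`, it suffices that `y_α(s) ≤ y_α(s - t) + α t` whenever
`0 ≤ t ≤ α^{-3/2}`. Below `α^{-3/2}` the barrier vanishes and `Y` is nonnegative; on the linear
branch the inequality is an identity; the branch `√s log₂ s` is only active where
`√s log₂ s ≤ α s`, which forces `log₂ s ≥ 6`, and there the growth of `√s log₂ s` over a window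
of length `t ≤ s` is at most `α t`.
-/

lemma Real.sqrt_add_le_add_div {u t : ℝ} (hu : 0 < u) (ht : 0 ≤ t) :
    √(u + t) ≤ √u + t / (2 * √u) := by
  have hv : 0 < √u := Real.sqrt_pos.mpr hu
  rw [Real.sqrt_le_left (by positivity), add_sq, Real.sq_sqrt hu.le]
  have hcross : 2 * √u * (t / (2 * √u)) = t := by field_simp
  nlinarith [sq_nonneg (t / (2 * √u))]

lemma Real.logb_add_le_add_div {b u t : ℝ} (hb : 1 < b) (hu : 0 < u) (ht : 0 ≤ t) :
    Real.logb b (u + t) ≤ Real.logb b u + t / (u * Real.log b) := by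
  have hlogb : 0 < Real.log b := Real.log_pos hb
  have hlog : Real.log (u + t) ≤ Real.log u + t / u := by
    have := Real.log_le_sub_one_of_pos (show 0 < (u + t) / u by positivity)
    rw [Real.log_div (by positivity) hu.ne', add_div, div_self hu.ne'] at this
    linarith
  calc Real.logb b (u + t) ≤ (Real.log u + t / u) / Real.log b :=
        div_le_div_of_nonneg_right hlog hlogb.le
    _ = Real.logb b u + t / (u * Real.log b) := by rw [Real.logb]; field_simp

lemma six_le_logb_of_logb_le_half_sqrt {u : ℝ} (hu : 2 < u)
    (h : Real.logb 2 u ≤ √u / 2) : 6 ≤ Real.logb 2 u := by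
  have hu0 : 0 < u := by linarith
  have down : ∀ m : ℕ, (2 : ℝ) ^ m ≤ u → (m : ℝ) ≤ Real.logb 2 u := fun m hm => by
    rwa [Real.le_logb_iff_rpow_le one_lt_two hu0, Real.rpow_natCast]
  have up : ∀ c : ℝ, 0 ≤ c → c ≤ Real.logb 2 u → 4 * c ^ 2 ≤ u := fun c hc hcb => by
    have : 2 * c ≤ √u := by linarith
    nlinarith [Real.sq_sqrt hu0.le]
  have h1 := down 1 (by norm_num; linarith)
  have h2 := down 2 (by norm_num; nlinarith [up 1 (by norm_num) (by exact_mod_cast h1)])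
  have h4 := down 4 (by norm_num; nlinarith [up 2 (by norm_num) (by exact_mod_cast h2)])
  have h6 := down 6 (by norm_num; nlinarith [up 4 (by norm_num) (by exact_mod_cast h4)])
  exact_mod_cast h6

lemma sqrt_mul_logb_add_le {α u t : ℝ} (hα0 : 0 < α) (hα : α ≤ 1 / 2) (ht0 : 0 ≤ t)
    (htu : t ≤ u) (hu : 2 < u) (hcap : √u * Real.logb 2 u ≤ α * u) :
    √(u + t) * Real.logb 2 (u + t) ≤ √u * Real.logb 2 u + α * t := by
  have hu0 : 0 < u := by linarith
  set v := √u
  set b := Real.logb 2 u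
  set L := Real.log 2
  have hv : 0 < v := Real.sqrt_pos.mpr hu0
  have hv2 : v ^ 2 = u := Real.sq_sqrt hu0.le
  have hbv : b ≤ α * v := by nlinarith
  have hb6 : 6 ≤ b := six_le_logb_of_logb_le_half_sqrt hu (by nlinarith)
  have hvL : 3 ≤ α * v * L := by
    have := Real.log_two_gt_d9
    nlinarith
  have hsqrt : √(u + t) ≤ v + t / (2 * v) := Real.sqrt_add_le_add_div hu0 ht0
  have hlogb : Real.logb 2 (u + t) ≤ b + t / (u * L) :=
    Real.logb_add_le_add_div one_lt_two hu0 ht0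
  -- the three correction terms of the product are at most `α t / 2`, `α t / 3` and `α t / 6`
  have h1 : t * b / (2 * v) ≤ α * t / 2 := by
    rw [div_le_div_iff₀ (by positivity) (by norm_num)]
    nlinarith [mul_le_mul_of_nonneg_left hbv ht0]
  have h2 : t / (v * L) ≤ α * t / 3 := by
    rw [div_le_div_iff₀ (by positivity) (by norm_num)]
    nlinarith [mul_le_mul_of_nonneg_left hvL ht0]
  have h3 : t ^ 2 / (2 * v ^ 3 * L) ≤ α * t / 6 := by
    rw [div_le_div_iff₀ (by positivity) (by norm_num)]
    nlinarith [mul_le_mul_of_nonneg_left hvL (mul_nonneg ht0 (sq_nonneg v))]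
  calc √(u + t) * Real.logb 2 (u + t)
      ≤ (v + t / (2 * v)) * (b + t / (u * L)) :=
        mul_le_mul hsqrt hlogb (Real.logb_nonneg one_lt_two (by linarith)) (by positivity)
    _ = v * b + t * b / (2 * v) + t / (v * L) + t ^ 2 / (2 * v ^ 3 * L) := by
        rw [← hv2]; field_simp; ring
    _ ≤ v * b + α * t := by linarith

lemma two_le_rpow_neg_three_halves {α : ℝ} (hα0 : 0 < α) (hα : α ≤ 1 / 2) :
    2 ≤ α ^ (-(3:ℝ)/2) := by
  calc (2 : ℝ) ≤ α⁻¹ := by rw [le_inv_comm₀ (by norm_num) hα0]; linarith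
    _ = α ^ (-(1:ℝ)) := (Real.rpow_neg_one α).symm
    _ ≤ α ^ (-(3:ℝ)/2) := Real.rpow_le_rpow_of_exponent_ge hα0 (by linarith) (by norm_num)

lemma yFun_of_le {α s : ℝ} (hs : s ≤ α ^ (-(3:ℝ)/2)) : yFun α s = 0 := if_pos hs

lemma yFun_le_yFun_sub_add {α t : ℝ} (hα0 : 0 < α) (hα : α ≤ 1 / 2) (ht0 : 0 ≤ t)
    (ht : t ≤ α ^ (-(3:ℝ)/2)) (s : ℝ) :
    yFun α s ≤ yFun α (s - t) + α * t := by
  set c := α ^ (-(3:ℝ)/2)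
  have hc2 : 2 ≤ c := two_le_rpow_neg_three_halves hα0 hα
  have hαt : 0 ≤ α * t := by positivity
  rcases le_or_gt s c with hsc | hsc
  · rw [yFun_of_le hsc, yFun_of_le (by linarith : s - t ≤ c)]
    linarith
  have hs_eq : yFun α s = min (α * (s - c)) (√s * Real.logb 2 s) := if_neg hsc.not_ge
  rcases le_or_gt (s - t) c with hsc' | hsc'
  · rw [yFun_of_le hsc', hs_eq]
    nlinarith [min_le_left (α * (s - c)) (√s * Real.logb 2 s)]
  rw [hs_eq, yFun, if_neg hsc'.not_ge]
  rcases le_total (α * (s - t - c)) (√(s - t) * Real.logb 2 (s - t)) with hcap | hcap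
  · rw [min_eq_left hcap]
    linarith [min_le_left (α * (s - c)) (√s * Real.logb 2 s)]
  · rw [min_eq_right hcap]
    have hgrowth := sqrt_mul_logb_add_le hα0 hα ht0 (by linarith) (by linarith)
      (hcap.trans (by nlinarith : α * (s - t - c) ≤ α * (s - t)))
    rw [sub_add_cancel] at hgrowth
    exact (min_le_right _ _).trans hgrowth

namespace MDLA1D

variable {K : ℝ} {Ω Ω' : Type} [MeasurableSpace Ω] [MeasurableSpace Ω']

lemma Y_nonneg (M : MDLA1D K Ω Ω') {t s : ℝ} (hs : 0 ≤ s) (ω : Ω) : 0 ≤ M.Y t s ω := by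
  unfold Y
  split_ifs
  · have := M.X_mono ω (by linarith : t - s ≤ t)
    exact_mod_cast sub_nonneg.mpr this
  · exact le_top

lemma Y_add (M : MDLA1D K Ω Ω') (T t s : ℝ) (ω : Ω) :
    M.Y (T + t) s ω = ((M.X (T + t) ω - M.X T ω : ℤ) : ℝ) + M.Y T (s - t) ω := by
  unfold Y
  by_cases hs : s ≤ T + t
  · rw [if_pos hs, if_pos (by linarith), ← EReal.coe_add, sub_sub_eq_add_sub]
    congr 1
    push_cast
    ring
  · rw [if_neg hs, if_neg (by linarith), EReal.coe_add_top]

end MDLA1D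

theorem barrier_persists_general {K : ℝ}
    {Ω Ω' : Type} [MeasurableSpace Ω] [MeasurableSpace Ω'] (M : MDLA1D K Ω Ω')
    (α : ℝ) (hα0 : 0 < α) (hα : α ≤ 1/2) (T : ℝ)
    (t : ℝ) (ht0 : 0 ≤ t) (ht : t ≤ α ^ (-(3:ℝ)/2)) (γ : ℝ) (hγ : 1 ≤ γ) (ω : Ω)
    (hY : ∀ s : ℝ, 0 ≤ s → ((yFun α s : ℝ) : EReal) ≤ M.Y T s ω)
    (hR : ω ∈ M.R T t (α * γ)) :
    ∀ s : ℝ, 0 ≤ s → ((yFun α s : ℝ) : EReal) ≤ M.Y (T + t) s ω := by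
  intro s hs
  rcases le_or_gt s (α ^ (-(3:ℝ)/2)) with hsc | hsc
  · rw [yFun_of_le hsc]
    exact M.Y_nonneg hs ω
  have hjump : α * t ≤ ((M.X (T + t) ω - M.X T ω : ℤ) : ℝ) :=
    le_trans (by nlinarith [mul_nonneg hα0.le ht0]) hR
  calc ((yFun α s : ℝ) : EReal) ≤ ((α * t : ℝ) : EReal) + ((yFun α (s - t) : ℝ) : EReal) := by
        rw [← EReal.coe_add, EReal.coe_le_coe_iff, add_comm]
        exact yFun_le_yFun_sub_add hα0 hα ht0 ht s
    _ ≤ ((M.X (T + t) ω - M.X T ω : ℤ) : ℝ) + M.Y T (s - t) ω :=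
        add_le_add (EReal.coe_le_coe_iff.mpr hjump) (hY _ (by linarith))
    _ = M.Y (T + t) s ω := (M.Y_add T t s ω).symm

/-- Suppose `0 < α ≤ 1/2` and `Y_T(s) ≥ y_α(s)` for all `s ≥ 0`.  Then for any
`0 ≤ t ≤ α^(-3/2)` and any `γ ≥ 1`, on the event `R(T, t, αγ)` one has
`Y_(T+t)(s) ≥ y_α(s)` for all `s ≥ 0`. -/
theorem barrier_persists {K : ℝ} (hK : 0 < K)
    {Ω Ω' : Type} [MeasurableSpace Ω] [MeasurableSpace Ω'] (M : MDLA1D K Ω Ω')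
    (α : ℝ) (hα0 : 0 < α) (hα : α ≤ 1/2) (T : ℝ) (hT : 0 ≤ T)
    (t : ℝ) (ht0 : 0 ≤ t) (ht : t ≤ α ^ (-(3:ℝ)/2)) (γ : ℝ) (hγ : 1 ≤ γ) (ω : Ω)
    (hY : ∀ s : ℝ, 0 ≤ s → ((yFun α s : ℝ) : EReal) ≤ M.Y T s ω)
    (hR : ω ∈ M.R T t (α * γ)) :
    ∀ s : ℝ, 0 ≤ s → ((yFun α s : ℝ) : EReal) ≤ M.Y (T + t) s ω :=
  barrier_persists_general M α hα0 hα T t ht0 ht γ hγ ω hY hR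

end
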